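/- Let Compress be the LZ77 compression function with unbounded sliding window size W = n over a finite alphabet Σ. Then the global sensitivity for strings of length n satisfies GS ≤ ((∛9/2)·n^{2/3} + (∛3/2)·n^{1/3} + 1)·(2⌈log₂ n⌉ + ⌈log₂|Σ|⌉). -/

import Mathlib

/-- A single LZ77 block `[q, len, c]`. -/
structure LZBlock (α : Type*) where
  q : ℕ
  len : ℕ
  c : α

/-- `s_i` (1-indexed start position of the `i`-th block, `i` 0-indexed). -/
def blockStart {α : Type*} (B : List (LZBlock α)) (i : ℕ) : ℕ :=
  1 + ((B.take i).map (fun b => b.len + 1)).sum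

/-- `f_i` (1-indexed final position of the `i`-th block, `i` 0-indexed). -/
def blockFin {α : Type*} (B : List (LZBlock α)) (i : ℕ) : ℕ :=
  ((B.take (i + 1)).map (fun b => b.len + 1)).sum

/-- `ℓ_i`, recovered as `f_i - s_i`. -/
def lenAt {α : Type*} (B : List (LZBlock α)) (i : ℕ) : ℕ :=
  blockFin B i - blockStart B i

/-- Non-overlapping LZ77 parse, sliding window `W`, of the length-`n` string `w`
(1-indexed positions). -/
def IsLZ77Parse {α : Type*} (W n : ℕ) (w : ℕ → α) (B : List (LZBlock α)) : Prop :=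
  ((B.map (fun b => b.len + 1)).sum = n) ∧
  ∀ i : Fin B.length,
    ((B.get i).c = w (blockStart B i.1 + (B.get i).len)) ∧
    ((B.get i).len = 0 → (B.get i).q = 0) ∧
    (0 < (B.get i).len →
      1 ≤ (B.get i).q ∧
      blockStart B i.1 ≤ (B.get i).q + W ∧
      (B.get i).q + (B.get i).len ≤ blockStart B i.1 ∧
      ∀ d < (B.get i).len, w ((B.get i).q + d) = w (blockStart B i.1 + d)) ∧
    (blockStart B i.1 + (B.get i).len + 1 ≤ n →
      ¬ ∃ q', 1 ≤ q' ∧ blockStart B i.1 ≤ q' + W ∧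
          q' + (B.get i).len + 1 ≤ blockStart B i.1 ∧
          ∀ d ≤ (B.get i).len, w (q' + d) = w (blockStart B i.1 + d))

/-- LZ77 parse with self-referencing (unbounded window). -/
def IsLZ77SRParse {α : Type*} (n : ℕ) (w : ℕ → α) (B : List (LZBlock α)) : Prop :=
  ((B.map (fun b => b.len + 1)).sum = n) ∧
  ∀ i : Fin B.length,
    ((B.get i).c = w (blockStart B i.1 + (B.get i).len)) ∧
    ((B.get i).len = 0 → (B.get i).q = 0) ∧
    (0 < (B.get i).len →
      1 ≤ (B.get i).q ∧
      (B.get i).q < blockStart B i.1 ∧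
      ∀ d < (B.get i).len, w ((B.get i).q + d) = w (blockStart B i.1 + d)) ∧
    (blockStart B i.1 + (B.get i).len + 1 ≤ n →
      ¬ ∃ q', 1 ≤ q' ∧ q' < blockStart B i.1 ∧
          ∀ d ≤ (B.get i).len, w (q' + d) = w (blockStart B i.1 + d))

/-- `w ∼ w'`: strings of length `n` differing in exactly one position. -/
def Neighbor {α : Type*} (n : ℕ) (w w' : ℕ → α) : Prop :=
  ∃ j, 1 ≤ j ∧ j ≤ n ∧ w j ≠ w' j ∧ ∀ i, i ≠ j → w i = w' i

/-- `M_i`: the set of (0-indexed) blocks of `B'` that start inside block `i` of `B`. -/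
def Mset {α : Type*} (B B' : List (LZBlock α)) (i : ℕ) : Finset ℕ :=
  (Finset.range B'.length).filter
    (fun k => blockStart B i ≤ blockStart B' k ∧ blockStart B' k ≤ blockFin B i)

/-- Indices of type-`m` blocks of `B` (relative to `B'`). -/
def typeSet {α : Type*} (B B' : List (LZBlock α)) (m : ℕ) : Finset ℕ :=
  (Finset.range B.length).filter (fun i => (Mset B B' i).card = m)

/-- Number of bits used to encode each block. -/
def codeLen (n cardS : ℕ) : ℕ :=
  2 * Nat.clog 2 n + Nat.clog 2 cardS

/-!
Let `j` be the position where `w` and `w'` differ, and `B`, `B'` their parses. Each block of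
`B'` starts inside a block of `B`, and the last block of `B'` starting inside a given block of `B`
is charged to it; every other block of `B'` is *inner*: it lies, literal included, inside the
copied part of a block of `B`, so its text already occurs earlier in `w`. By maximality of the
parse of `w'` either the inner block contains `j` (at most one does) or that earlier occurrence
does. Two earlier occurrences through `j` of the same length `ℓ + 1` have different starting
points, since distinct non-final blocks of the same length have distinct texts; so at most
`ℓ + 1` inner blocks have length `ℓ`. As their lengths `ℓ + 1` add up to at most `n`, there are
at most `(x² + x) / 2` of them, where `x³ = 3n`.
-/

open Finset

section Geometry

variable {α : Type*} (B : List (LZBlock α))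

@[simp]
lemma blockStart_zero : blockStart B 0 = 1 := by simp [blockStart]

lemma blockStart_mono : Monotone (blockStart B) := fun i i' h => by
  unfold blockStart
  gcongr 1 + ?_
  exact (List.take_sublist_take_left h).map _ |>.sum_le_sum fun _ _ => Nat.zero_le _

lemma blockFin_eq {i : ℕ} (hi : i < B.length) : blockFin B i = blockStart B i + B[i].len := by
  have := List.sum_take_succ (B.map fun b => b.len + 1) i (by simpa using hi)
  simp only [List.getElem_map, ← List.map_take] at this
  rw [blockFin, blockStart, this]
  ring

lemma lenAt_eq {i : ℕ} (hi : i < B.length) : lenAt B i = B[i].len := by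
  rw [lenAt, blockFin_eq B hi]; omega

lemma blockStart_succ {i : ℕ} (hi : i < B.length) :
    blockStart B (i + 1) = blockStart B i + lenAt B i + 1 := by
  rw [lenAt_eq B hi, ← blockFin_eq B hi, blockStart, blockFin, add_comm]

lemma eq_of_blockStart_le_of_lt {i i' p : ℕ} (hi : blockStart B i ≤ p)
    (hpi : p < blockStart B (i + 1)) (hi' : blockStart B i' ≤ p)
    (hpi' : p < blockStart B (i' + 1)) : i = i' := by
  by_contra hne
  rcases lt_or_gt_of_ne hne with h | h
  · have := blockStart_mono B (show i + 1 ≤ i' from h); omega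
  · have := blockStart_mono B (show i' + 1 ≤ i from h); omega

end Geometry

namespace IsLZ77Parse

variable {α : Type*} {W n : ℕ} {w : ℕ → α} {B : List (LZBlock α)}

lemma blockStart_length (hB : IsLZ77Parse W n w B) : blockStart B B.length = n + 1 := by
  rw [blockStart, List.take_length, hB.1, add_comm]

lemma blockStart_le (hB : IsLZ77Parse W n w B) (i : ℕ) : blockStart B i ≤ n + 1 := by
  rw [blockStart, add_comm, ← hB.1]
  gcongr
  exact (List.take_sublist i B).map _ |>.sum_le_sum fun _ _ => Nat.zero_le _

lemma sum_lenAt (hB : IsLZ77Parse W n w B) : ∑ i ∈ range B.length, (lenAt B i + 1) = n := by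
  have hstep : ∀ i ∈ range B.length, lenAt B i + 1 = blockStart B (i + 1) - blockStart B i :=
    fun i hi => by have := blockStart_succ B (mem_range.1 hi); omega
  rw [sum_congr rfl hstep, sum_range_tsub (blockStart_mono B), hB.blockStart_length,
    blockStart_zero, Nat.add_sub_cancel]

lemma exists_mem_block {p : ℕ} (hB : IsLZ77Parse W n w B) (hp : 1 ≤ p) (hpn : p ≤ n) :
    ∃ i < B.length, blockStart B i ≤ p ∧ p < blockStart B (i + 1) := by
  have hend := hB.blockStart_length
  have hex : ∃ i, p < blockStart B (i + 1) :=
    ⟨B.length, by have := blockStart_mono B (Nat.le_add_right B.length 1); omega⟩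
  refine ⟨Nat.find hex, ?_, ?_, Nat.find_spec hex⟩
  · by_contra hlen
    obtain ⟨m, hm⟩ : ∃ m, B.length = m + 1 :=
      Nat.exists_eq_succ_of_ne_zero fun h => by rw [h, blockStart_zero] at hend; omega
    have := Nat.find_min hex (m := m) (by omega)
    rw [← hm] at this
    omega
  · rcases h : Nat.find hex with _ | i
    · simpa using hp
    · simpa using Nat.find_min hex (show i < Nat.find hex by omega)

lemma exists_source {i : ℕ} (hB : IsLZ77Parse W n w B) (hi : i < B.length)
    (hpos : 0 < lenAt B i) :
    ∃ q, 1 ≤ q ∧ q + lenAt B i ≤ blockStart B i ∧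
      ∀ d < lenAt B i, w (q + d) = w (blockStart B i + d) := by
  rw [lenAt_eq B hi] at hpos ⊢
  obtain ⟨hq, -, hqs, hcopy⟩ := (hB.2 ⟨i, hi⟩).2.2.1 hpos
  exact ⟨_, hq, hqs, hcopy⟩

lemma exists_earlier_occurrence {i a ℓ : ℕ} (hB : IsLZ77Parse W n w B) (hi : i < B.length)
    (ha : blockStart B i ≤ a) (haℓ : a + ℓ + 1 < blockStart B (i + 1)) :
    ∃ g, 1 ≤ g ∧ g + ℓ + 1 ≤ a ∧ ∀ d ≤ ℓ, w (g + d) = w (a + d) := by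
  rw [blockStart_succ B hi] at haℓ
  obtain ⟨q, hq, hqs, hcopy⟩ := hB.exists_source hi (by omega)
  refine ⟨q + (a - blockStart B i), by omega, by omega, fun d hd => ?_⟩
  have := hcopy (a - blockStart B i + d) (by omega)
  rwa [← add_assoc, ← add_assoc, Nat.add_sub_cancel' ha] at this

lemma not_earlier_occurrence {k q : ℕ} (hB : IsLZ77Parse W n w B) (hk : k < B.length)
    (hkn : blockStart B (k + 1) ≤ n) (hq : 1 ≤ q) (hqW : blockStart B k ≤ q + W)
    (hqk : q + lenAt B k + 1 ≤ blockStart B k) :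
    ¬ ∀ d ≤ lenAt B k, w (q + d) = w (blockStart B k + d) := by
  rw [blockStart_succ B hk] at hkn
  rw [lenAt_eq B hk] at hkn hqk ⊢
  exact fun h => (hB.2 ⟨k, hk⟩).2.2.2 hkn ⟨q, hq, hqW, hqk, h⟩

lemma block_text_ne_of_lt {a b : ℕ} (hB : IsLZ77Parse n n w B) (hab : a < b)
    (hb : b < B.length) (hbn : blockStart B (b + 1) ≤ n) (hlen : lenAt B a = lenAt B b) :
    ¬ ∀ d ≤ lenAt B b, w (blockStart B a + d) = w (blockStart B b + d) := by
  have hmono := blockStart_mono B (show a + 1 ≤ b from hab)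
  have hsucc := blockStart_succ B (hab.trans hb)
  have hb1 := blockStart_le hB b
  have ha1 := blockStart_zero B ▸ blockStart_mono B a.zero_le
  exact hB.not_earlier_occurrence hb hbn ha1 (by omega) (by omega)

lemma card_filter_lenAt_eq_le {v : ℕ → α} {j : ℕ} {S : Finset ℕ} (hB : IsLZ77Parse n n w B)
    (hS : ∀ k ∈ S, k < B.length ∧ blockStart B (k + 1) ≤ n)
    (hocc : ∀ k ∈ S, ∃ g, g ≤ j ∧ j ≤ g + lenAt B k ∧
      ∀ d ≤ lenAt B k, v (g + d) = w (blockStart B k + d)) (ℓ : ℕ) :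
    #{k ∈ S | lenAt B k = ℓ} ≤ ℓ + 1 := by
  choose! g hg_le hg_ge hg_eq using hocc
  have hsame : ∀ a ∈ {k ∈ S | lenAt B k = ℓ}, ∀ b ∈ {k ∈ S | lenAt B k = ℓ},
      a < b → g a ≠ g b := by
    intro a ha b hb hab hg
    rw [mem_filter] at ha hb
    refine hB.block_text_ne_of_lt hab (hS b hb.1).1 (hS b hb.1).2 (ha.2.trans hb.2.symm)
      fun d hd => ?_
    rw [← hg_eq a ha.1 d (by omega), ← hg_eq b hb.1 d hd, hg]
  calc #{k ∈ S | lenAt B k = ℓ} ≤ #(Icc (j - ℓ) j) := by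
        refine card_le_card_of_injOn g (fun k hk => ?_) fun a ha b hb hab => ?_
        · rw [mem_coe, mem_filter] at hk
          have := hg_le k hk.1
          have := hg_ge k hk.1
          rw [mem_coe, mem_Icc]
          omega
        · by_contra hne
          rcases lt_or_gt_of_ne hne with h | h
          · exact hsame a ha b hb h hab
          · exact hsame b hb a ha h hab.symm
    _ ≤ ℓ + 1 := by rw [Nat.card_Icc]; omega

end IsLZ77Parse

section Counting

lemma card_mul_le_of_card_fiber_le {ι : Type*} {K : Finset ι} {L : ι → ℕ} {m : ℕ}
    (hfiber : ∀ ℓ, #{i ∈ K | L i = ℓ} ≤ ℓ + 1) (hsum : ∑ i ∈ K, (L i + 1) ≤ m) (k : ℕ) :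
    6 * ((k + 1) * #K) ≤ 6 * m + k * (k + 1) * (k + 2) := by
  have hshort : ∀ a, 2 * #{i ∈ K | L i < a} ≤ a * (a + 1) := fun a => calc
    2 * #{i ∈ K | L i < a} ≤ 2 * ∑ ℓ ∈ range a, #{i ∈ K | L i = ℓ} := by
      rw [card_eq_sum_card_fiberwise (f := L) (t := range a) (fun i hi => by simp_all)]
      gcongr with ℓ
      exact filter_subset _ _
    _ ≤ 2 * ∑ ℓ ∈ range a, (ℓ + 1) := by gcongr with ℓ; exact hfiber ℓ
    _ = a * (a + 1) := by
      induction a with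
      | zero => simp
      | succ a ih => rw [sum_range_succ, mul_add, ih]; ring
  have hlong : ∑ a ∈ range (k + 1), #{i ∈ K | a ≤ L i} ≤ m := calc
    ∑ a ∈ range (k + 1), #{i ∈ K | a ≤ L i}
        = ∑ i ∈ K, #{a ∈ range (k + 1) | a ≤ L i} := by
      simp only [card_filter]; exact sum_comm
    _ ≤ ∑ i ∈ K, (L i + 1) := by
      gcongr with i
      exact (card_le_card fun a ha => by simp at ha ⊢; omega).trans (card_range _).le
    _ ≤ m := hsum
  have hsplit : ∀ a, #{i ∈ K | a ≤ L i} + #{i ∈ K | L i < a} = #K := fun a => by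
    simpa only [not_le] using card_filter_add_card_filter_not (s := K) (fun i => a ≤ L i)
  have hpoly : ∀ k, 3 * ∑ a ∈ range (k + 1), a * (a + 1) = k * (k + 1) * (k + 2) := fun k => by
    induction k with
    | zero => simp
    | succ k ih => rw [sum_range_succ, mul_add, ih]; ring
  have hsix : 6 * ∑ a ∈ range (k + 1), #{i ∈ K | L i < a} ≤ k * (k + 1) * (k + 2) := by
    rw [← hpoly, mul_sum, mul_sum]
    exact sum_le_sum fun a _ => by linarith [hshort a]
  have hcount : (k + 1) * #K = ∑ a ∈ range (k + 1), #{i ∈ K | a ≤ L i}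
      + ∑ a ∈ range (k + 1), #{i ∈ K | L i < a} := by
    rw [← sum_add_distrib, sum_congr rfl fun a _ => hsplit a]; simp
  omega

lemma two_mul_le_sq_add_self {E m : ℕ} {x : ℝ} (hx : 0 ≤ x) (hm : 3 * (m : ℝ) ≤ x ^ 3)
    (h : ∀ k : ℕ, 6 * ((k + 1) * E) ≤ 6 * m + k * (k + 1) * (k + 2)) :
    2 * (E : ℝ) ≤ x ^ 2 + x := by
  set k := ⌊x⌋₊
  have hkx : (k : ℝ) ≤ x := Nat.floor_le hx
  have hxk : x < k + 1 := Nat.lt_floor_add_one x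
  have hk : 6 * ((k + 1) * (E : ℝ)) ≤ 6 * m + k * (k + 1) * (k + 2) := by exact_mod_cast h k
  -- with `t = x - k ∈ [0, 1)` the gap is `k (3k + 1) + (9k + 3) t + 3 (1 - k) t² - 2 t³ ≥ 0`
  have hcubic : 2 * x ^ 3 + k * (k + 1) * (k + 2) ≤ 3 * (k + 1) * (x ^ 2 + x) := by
    have ht0 : 0 ≤ x - k := by linarith
    have ht1 : 0 ≤ 1 - (x - k) := by linarith
    nlinarith [mul_nonneg ht0 ht1, mul_nonneg (mul_nonneg ht0 ht0) ht1,
      mul_nonneg (Nat.cast_nonneg k : (0 : ℝ) ≤ k) (mul_nonneg ht0 ht1)]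
  have hk1 : (0 : ℝ) < k + 1 := by positivity
  nlinarith

lemma card_le_of_card_fiber_le {ι : Type*} {K : Finset ι} {L : ι → ℕ} {m : ℕ} {x : ℝ}
    (hfiber : ∀ ℓ, #{i ∈ K | L i = ℓ} ≤ ℓ + 1) (hsum : ∑ i ∈ K, (L i + 1) ≤ m) (hx : 0 ≤ x)
    (hm : 3 * (m : ℝ) ≤ x ^ 3) : (#K : ℝ) ≤ (x ^ 2 + x) / 2 := by
  have := two_mul_le_sq_add_self hx hm (card_mul_le_of_card_fiber_le hfiber hsum)
  linarith

end Counting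

section OneChange

variable {α : Type*}

/-- Blocks of `B'` lying, literal included, inside the copied part of some block of `B`. -/
def innerBlocks (B B' : List (LZBlock α)) : Finset ℕ :=
  {k ∈ range B'.length | ∃ i < B.length,
    blockStart B i ≤ blockStart B' k ∧ blockStart B' (k + 1) < blockStart B (i + 1)}

lemma innerBlocks_subset (B B' : List (LZBlock α)) : innerBlocks B B' ⊆ range B'.length :=
  filter_subset _ _

variable {W W' n : ℕ} {w w' : ℕ → α} {B B' : List (LZBlock α)}

lemma IsLZ77Parse.blockStart_succ_le_of_mem_innerBlocks {k : ℕ} (hB : IsLZ77Parse W n w B)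
    (hk : k ∈ innerBlocks B B') : blockStart B' (k + 1) ≤ n := by
  obtain ⟨-, i, -, -, hik⟩ := by simpa [innerBlocks] using hk
  have := hB.blockStart_le (i + 1)
  omega

lemma length_le_length_add_card_innerBlocks (hB : IsLZ77Parse W n w B)
    (hB' : IsLZ77Parse W' n w' B') : B'.length ≤ B.length + #(innerBlocks B B') := by
  have hhost : ∀ k < B'.length, ∃ i < B.length,
      blockStart B i ≤ blockStart B' k ∧ blockStart B' k < blockStart B (i + 1) := fun k hk => by
    have := blockStart_zero B' ▸ blockStart_mono B' k.zero_le
    have := blockStart_succ B' hk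
    have := hB'.blockStart_le (k + 1)
    exact hB.exists_mem_block (by omega) (by omega)
  choose! host hhost_lt hhost_le hhost_gt using hhost
  -- a block `k` of `B'` that is not inner contains the last position of its host block
  have hinj : Set.InjOn host ↑(range B'.length \ innerBlocks B B') := by
    intro a ha b hb hab
    simp only [innerBlocks, mem_coe, mem_sdiff, mem_filter, mem_range, not_and, not_exists,
      not_lt] at ha hb
    have ha_end := ha.2 ha.1 (host a) (hhost_lt a ha.1) (hhost_le a ha.1)
    have hb_end := hb.2 hb.1 (host b) (hhost_lt b hb.1) (hhost_le b hb.1)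
    have ha_gt := hhost_gt a ha.1
    have hb_gt := hhost_gt b hb.1
    rw [hab] at ha_end ha_gt
    exact eq_of_blockStart_le_of_lt B' (p := blockStart B (host b + 1) - 1)
      (by omega) (by omega) (by omega) (by omega)
  have houter : #(range B'.length \ innerBlocks B B') ≤ B.length :=
    (card_le_card_of_injOn host (fun k hk => by simpa using hhost_lt k (by simp_all)) hinj).trans
      (card_range _).le
  have := card_sdiff_add_card_eq_card (innerBlocks_subset B B')
  rw [card_range] at this
  omega

lemma exists_window_of_mem_innerBlocks {j k : ℕ} (hww' : ∀ p ≠ j, w p = w' p)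
    (hB : IsLZ77Parse W n w B) (hB' : IsLZ77Parse n n w' B') (hk : k ∈ innerBlocks B B')
    (hj : ¬ (blockStart B' k ≤ j ∧ j < blockStart B' (k + 1))) :
    ∃ g, g ≤ j ∧ j ≤ g + lenAt B' k ∧
      ∀ d ≤ lenAt B' k, w (g + d) = w' (blockStart B' k + d) := by
  have hkn := hB.blockStart_succ_le_of_mem_innerBlocks hk
  obtain ⟨hk, i, hi, his, hik⟩ := by simpa [innerBlocks] using hk
  have hsucc := blockStart_succ B' hk
  obtain ⟨g, hg, hgk, hcopy⟩ :=
    hB.exists_earlier_occurrence (ℓ := lenAt B' k) hi his (by omega)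
  have hcopy' : ∀ d ≤ lenAt B' k, w (g + d) = w' (blockStart B' k + d) := fun d hd => by
    rw [hcopy d hd, hww' (blockStart B' k + d) (by omega)]
  -- otherwise `w'` has the text of block `k` followed by its literal at `g`, so `B'` could have
  -- copied one more symbol
  suffices hwin : g ≤ j ∧ j ≤ g + lenAt B' k from ⟨g, hwin.1, hwin.2, hcopy'⟩
  by_contra hwin
  refine hB'.not_earlier_occurrence hk (by omega) hg (by omega) (by omega) fun d hd => ?_
  rw [← hww' (g + d) (by omega), hcopy' d hd]

lemma card_innerBlocks_le {j : ℕ} {x : ℝ} (hww' : ∀ p ≠ j, w p = w' p)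
    (hB : IsLZ77Parse W n w B) (hB' : IsLZ77Parse n n w' B') (hx : 0 ≤ x)
    (hxn : 3 * (n : ℝ) ≤ x ^ 3) : (#(innerBlocks B B') : ℝ) ≤ 1 + (x ^ 2 + x) / 2 := by
  set covers : ℕ → Prop := fun k => blockStart B' k ≤ j ∧ j < blockStart B' (k + 1)
  have hsplit := card_filter_add_card_filter_not (s := innerBlocks B B') covers
  have hcovering : #{k ∈ innerBlocks B B' | covers k} ≤ 1 := card_le_one.2 fun a ha b hb => by
    simp only [mem_filter, covers] at ha hb
    exact eq_of_blockStart_le_of_lt B' ha.2.1 ha.2.2 hb.2.1 hb.2.2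
  set rest := {k ∈ innerBlocks B B' | ¬ covers k}
  have hbounds : ∀ k ∈ rest, k < B'.length ∧ blockStart B' (k + 1) ≤ n := fun k hk => by
    have hk := (mem_filter.1 hk).1
    exact ⟨mem_range.1 (innerBlocks_subset B B' hk), hB.blockStart_succ_le_of_mem_innerBlocks hk⟩
  have hwindow := fun k (hk : k ∈ rest) =>
    exists_window_of_mem_innerBlocks hww' hB hB' (mem_filter.1 hk).1 (mem_filter.1 hk).2
  have hsum : ∑ k ∈ rest, (lenAt B' k + 1) ≤ n := hB'.sum_lenAt ▸
    sum_le_sum_of_subset ((filter_subset _ _).trans (innerBlocks_subset B B'))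
  have hrest := card_le_of_card_fiber_le (hB'.card_filter_lenAt_eq_le hbounds hwindow) hsum hx hxn
  have : (#{k ∈ innerBlocks B B' | covers k} : ℝ) ≤ 1 := by exact_mod_cast hcovering
  rw [← hsplit, Nat.cast_add]
  linarith

lemma length_le_length_add {j : ℕ} {x : ℝ} (hww' : ∀ p ≠ j, w p = w' p)
    (hB : IsLZ77Parse n n w B) (hB' : IsLZ77Parse n n w' B') (hx : 0 ≤ x)
    (hxn : 3 * (n : ℝ) ≤ x ^ 3) : (B'.length : ℝ) ≤ B.length + (1 + (x ^ 2 + x) / 2) := by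
  have := card_innerBlocks_le hww' hB hB' hx hxn
  have : (B'.length : ℝ) ≤ B.length + #(innerBlocks B B') := by
    exact_mod_cast length_le_length_add_card_innerBlocks hB hB'
  linarith

end OneChange

/-- Theorem: upper bound on the global sensitivity of LZ77,
`W = n`. Over a finite alphabet `Σ`, for every pair of neighboring strings
`w ∼ w' ∈ Σⁿ` (so the maximum over all such pairs, i.e. the global sensitivity,
obeys the same bound),
`||Compress(w)| − |Compress(w')|| ≤ ((∛9/2)·n^(2/3) + (∛3/2)·n^(1/3) + 1)·(2⌈log₂ n⌉ + ⌈log₂ |Σ|⌉)`,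
where `|Compress(w)| = t·(2⌈log₂ n⌉ + ⌈log₂ |Σ|⌉)` for a `t`-block parse. -/
theorem lz77_global_sensitivity_upper {α : Type*} [Fintype α] (n : ℕ) :
    ∀ w w' : ℕ → α, Neighbor n w w' →
    ∀ B B' : List (LZBlock α),
      IsLZ77Parse n n w B → IsLZ77Parse n n w' B' →
      ((((B.length : ℤ) * (codeLen n (Fintype.card α) : ℤ)
          - (B'.length : ℤ) * (codeLen n (Fintype.card α) : ℤ)).natAbs : ℝ))
        ≤ ((9 : ℝ) ^ ((1 : ℝ) / 3) / 2 * (n : ℝ) ^ ((2 : ℝ) / 3)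
            + (3 : ℝ) ^ ((1 : ℝ) / 3) / 2 * (n : ℝ) ^ ((1 : ℝ) / 3) + 1)
          * (codeLen n (Fintype.card α) : ℝ) := by
  rintro w w' ⟨j, -, -, -, hww'⟩ B B' hB hB'
  have hcbrt : ∀ a : ℝ, 0 ≤ a → (a ^ (1 / 3 : ℝ)) ^ 3 = a := fun a ha => by
    rw [← Real.rpow_mul_natCast ha]; norm_num
  set x : ℝ := 3 ^ (1 / 3 : ℝ) * n ^ (1 / 3 : ℝ) with hxdef
  have hx : 0 ≤ x := by positivity
  have hx3 : x ^ 3 = 3 * n := by rw [mul_pow, hcbrt 3 (by norm_num), hcbrt n n.cast_nonneg]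
  have hx2 : x ^ 2 = 9 ^ (1 / 3 : ℝ) * n ^ (2 / 3 : ℝ) := by
    rw [mul_pow, ← Real.rpow_mul_natCast (by norm_num), ← Real.rpow_mul_natCast n.cast_nonneg,
      show (9 : ℝ) = 3 ^ (2 : ℝ) by norm_num, ← Real.rpow_mul (by norm_num)]
    norm_num
  have hfwd := length_le_length_add hww' hB hB' hx hx3.ge
  have hbwd := length_le_length_add (fun p hp => (hww' p hp).symm) hB' hB hx hx3.ge
  have hbound : (9 : ℝ) ^ ((1 : ℝ) / 3) / 2 * (n : ℝ) ^ ((2 : ℝ) / 3)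
      + (3 : ℝ) ^ ((1 : ℝ) / 3) / 2 * (n : ℝ) ^ ((1 : ℝ) / 3) + 1 = 1 + (x ^ 2 + x) / 2 := by
    rw [hx2, hxdef]; ring
  rw [hbound, Nat.cast_natAbs]
  push_cast
  rw [← sub_mul, abs_mul, Nat.abs_cast]
  exact mul_le_mul_of_nonneg_right (abs_sub_le_iff.2 ⟨by linarith, by linarith⟩)
    (Nat.cast_nonneg _)
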